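/- Positivity of ħ: for every s > 0 and every y ∈ (0,1), s^y · ( Γ(1−y) + y·∫_s^∞ t^{−1−y} e^{−t} dt ) > 1; equivalently, ħ(s, y) > 0. -/

import Mathlib

/-!
Integrating by parts on `(s, ∞)` gives `y Γ(-y, s) = s^{-y} e^{-s} - Γ(1 - y, s)`, so after
splitting `Γ(1 - y)` at `s` the quantity becomes `s^y ∫₀^s t^{-y} e^{-t} dt + e^{-s}`.
Since `(s / t)^y > 1` on `(0, s)`, the integral term exceeds `∫₀^s e^{-t} dt = 1 - e^{-s}`.
-/

open MeasureTheory Set Filter Real Topology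

theorem integrableOn_Ioi_rpow_mul_exp_neg (a : ℝ) {s : ℝ} (hs : 0 < s) :
    IntegrableOn (fun t : ℝ => t ^ a * exp (-t)) (Ioi s) := by
  refine integrable_of_isBigO_exp_neg one_half_pos ?_ ?_
  · exact fun t ht => ((continuousAt_rpow_const t a (Or.inl (hs.trans_le ht).ne')).mul
      continuous_neg.rexp.continuousAt).continuousWithinAt
  · simpa only [mul_comm, neg_mul] using (Gamma_integrand_isLittleO a).isBigO

theorem integral_Ioi_rpow_mul_exp_neg_eq (a : ℝ) {s : ℝ} (hs : 0 < s) :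
    ∫ t in Ioi s, t ^ a * exp (-t) =
      s ^ a * exp (-s) + a * ∫ t in Ioi s, t ^ (a - 1) * exp (-t) := by
  have hderiv : ∀ t ∈ Ici s, HasDerivAt (fun t : ℝ => -(t ^ a * exp (-t)))
      (t ^ a * exp (-t) - a * (t ^ (a - 1) * exp (-t))) t := fun t ht => by
    have hpow := hasDerivAt_rpow_const (p := a) (Or.inl (hs.trans_le ht).ne')
    exact (hpow.mul (hasDerivAt_neg t).exp).neg.congr_deriv (by ring)
  have hlim : Tendsto (fun t : ℝ => -(t ^ a * exp (-t))) atTop (𝓝 0) := by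
    simpa using (tendsto_rpow_mul_exp_neg_mul_atTop_nhds_zero a 1 one_pos).neg
  have hparts := integral_Ioi_of_hasDerivAt_of_tendsto' hderiv
    ((integrableOn_Ioi_rpow_mul_exp_neg a hs).sub
      ((integrableOn_Ioi_rpow_mul_exp_neg (a - 1) hs).const_mul a)) hlim
  rw [integral_sub (integrableOn_Ioi_rpow_mul_exp_neg a hs)
    ((integrableOn_Ioi_rpow_mul_exp_neg (a - 1) hs).const_mul a), integral_const_mul] at hparts
  linarith

theorem Gamma_eq_intervalIntegral_add_integral_Ioi {a : ℝ} (ha : 0 < a) {s : ℝ} (hs : 0 < s) :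
    Gamma a = (∫ t in (0)..s, t ^ (a - 1) * exp (-t)) +
      ∫ t in Ioi s, t ^ (a - 1) * exp (-t) := by
  have hconv : IntegrableOn (fun t : ℝ => t ^ (a - 1) * exp (-t)) (Ioi 0) := by
    simpa only [mul_comm] using GammaIntegral_convergent ha
  rw [intervalIntegral.integral_interval_add_Ioi hconv
    (integrableOn_Ioi_rpow_mul_exp_neg (a - 1) hs), Gamma_eq_integral ha]
  simp only [mul_comm]

theorem one_sub_exp_neg_lt_rpow_mul_intervalIntegral {s y : ℝ} (hs : 0 < s) (hy₀ : 0 < y)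
    (hy₁ : y < 1) : 1 - exp (-s) < s ^ y * ∫ t in (0)..s, t ^ (-y) * exp (-t) := by
  have hint : IntervalIntegrable (fun t : ℝ => t ^ (-y) * exp (-t)) volume 0 s :=
    (intervalIntegral.intervalIntegrable_rpow' (by linarith)).mul_continuousOn
      continuous_neg.rexp.continuousOn
  have hexp_int : IntervalIntegrable (fun t : ℝ => exp (-t)) volume 0 s :=
    continuous_neg.rexp.intervalIntegrable 0 s
  have hexp : ∫ t in (0)..s, exp (-t) = 1 - exp (-s) := by
    simp [intervalIntegral.integral_comp_neg]
  have hgap : 0 < ∫ t in (0)..s, (s ^ y * (t ^ (-y) * exp (-t)) - exp (-t)) := by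
    refine intervalIntegral.intervalIntegral_pos_of_pos_on
      ((hint.const_mul _).sub hexp_int) (fun t ht => ?_) hs
    have hlt : s ^ y * s ^ (-y) < s ^ y * t ^ (-y) :=
      mul_lt_mul_of_pos_left (rpow_lt_rpow_of_neg ht.1 ht.2 (by linarith)) (rpow_pos_of_pos hs y)
    rw [← rpow_add hs, add_neg_cancel, rpow_zero] at hlt
    nlinarith [exp_pos (-t)]
  rw [intervalIntegral.integral_sub (hint.const_mul _) hexp_int,
    intervalIntegral.integral_const_mul, hexp] at hgap
  linarith

/-- Positivity of `ħ`: for every `s > 0` and every `y ∈ (0,1)`,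
`s^y·(Γ(1−y) + y·∫_s^∞ t^{−1−y} e^{−t} dt) > 1`, i.e. `ħ(s, y) > 0`. -/
theorem hbar_pos (s y : ℝ) (hs : 0 < s) (hy : y ∈ Set.Ioo (0 : ℝ) 1) :
    1 < s ^ y * (Real.Gamma (1 - y) + y * ∫ t in Ioi s, t ^ (-1 - y) * Real.exp (-t)) := by
  obtain ⟨hy₀, hy₁⟩ := hy
  have hGamma := Gamma_eq_intervalIntegral_add_integral_Ioi (a := 1 - y) (by linarith) hs
  have hparts := integral_Ioi_rpow_mul_exp_neg_eq (-y) hs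
  rw [show 1 - y - 1 = -y by ring] at hGamma
  rw [show -y - 1 = -1 - y by ring] at hparts
  have hcancel : s ^ y * s ^ (-y) = 1 := by rw [← rpow_add hs, add_neg_cancel, rpow_zero]
  have hlower := one_sub_exp_neg_lt_rpow_mul_intervalIntegral hs hy₀ hy₁
  rw [hGamma]
  linear_combination hlower - s ^ y * hparts - exp (-s) * hcancel
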